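/- Let H be a Hopf algebra over a commutative ring k with antipode S, and let σ: H → k be an algebra homomorphism (a character). Define Δ₂(h) = h₍₁₎ ⊗ σ(S(h₍₂₎)) h₍₃₎, ε₂ = σ, and S₂(h) = σ(h₍₁₎) S(h₍₂₎) σ(h₍₃₎). Then (H, m, 1, Δ₂, ε₂, S₂) is a Hopf algebra. -/

import Mathlib

/-!
For a character `χ`, the left winding map `W_χ(h) = χ(h₍₁₎) h₍₂₎` is an algebra endomorphism
satisfying `Δ ∘ W_χ = (W_χ ⊗ id) ∘ Δ`, and `Δ₂ = (id ⊗ W_{σ∘S}) ∘ Δ`. The first property makes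
`Δ₂` an algebra map, the second makes it coassociative. In the convolution ring `End(H)`,
`σ` (viewed as `h ↦ σ(h) 1`) is a unit with inverse `σ ∘ S`, `W_{σ∘S} = σ⁻¹ ⋆ id` and
`S₂ = σ ⋆ S ⋆ σ`; since `g ∘ (σ⁻¹ ⋆ id) = σ⁻¹ ⋆ g` for every linear `g`, the counit and
antipode axioms for `Δ₂` reduce to cancellations in this ring.
-/

open TensorProduct LinearMap

noncomputable section

variable {k H : Type*} [CommRing k] [Ring H] [HopfAlgebra k H]

/-- The map `H ⊗ H →ₗ H`, `a ⊗ b ↦ σ(a) • b`. -/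
def sigmaSmul (σ : H →ₐ[k] k) : H ⊗[k] H →ₗ[k] H :=
  TensorProduct.lift ((LinearMap.lsmul k H).comp σ.toLinearMap)

/-- The twisted coproduct `Δ₂(h) = h₍₁₎ ⊗ σ(S(h₍₂₎)) h₍₃₎`. -/
def twistedComul (σ : H →ₐ[k] k) : H →ₗ[k] H ⊗[k] H :=
  (LinearMap.lTensor H
      ((sigmaSmul σ) ∘ₗ LinearMap.rTensor H (HopfAlgebra.antipode (R := k)))) ∘ₗ
    (LinearMap.lTensor H (Coalgebra.comul (R := k))) ∘ₗ Coalgebra.comul (R := k)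

/-- The twisted antipode `S₂(h) = σ(h₍₁₎) S(h₍₂₎) σ(h₍₃₎)`. -/
def twistedAntipode (σ : H →ₐ[k] k) : H →ₗ[k] H :=
  (sigmaSmul σ) ∘ₗ
    (LinearMap.lTensor H
      ((sigmaSmul σ) ∘ₗ (TensorProduct.comm k H H).toLinearMap ∘ₗ
        LinearMap.rTensor H (HopfAlgebra.antipode (R := k)))) ∘ₗ
    (LinearMap.lTensor H (Coalgebra.comul (R := k))) ∘ₗ Coalgebra.comul (R := k)

open Coalgebra HopfAlgebra WithConv

section ConvolutionByScalars

variable {R M A B C : Type*} [CommSemiring R] [AddCommMonoid M] [Module R M]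
  [Semiring A] [Algebra R A] [Semiring B] [Algebra R B]
  [AddCommMonoid C] [Module R C] [Coalgebra R C]

lemma lid_comp_rTensor_eq_mul' (f : M →ₗ[R] R) :
    (TensorProduct.lid R A).toLinearMap ∘ₗ rTensor A f =
      mul' R A ∘ₗ rTensor A (Algebra.linearMap R A ∘ₗ f) := by
  ext m a
  simp [Algebra.smul_def]

lemma rid_comp_lTensor_eq_mul' (f : M →ₗ[R] R) :
    (TensorProduct.rid R A).toLinearMap ∘ₗ lTensor A f =
      mul' R A ∘ₗ lTensor A (Algebra.linearMap R A ∘ₗ f) := by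
  ext a m
  simp [Algebra.smul_def, Algebra.commutes]

lemma comp_algebraMap_convMul (g : A →ₗ[R] B) (f : C →ₗ[R] R) (h : C →ₗ[R] A) :
    g ∘ₗ (toConv (Algebra.linearMap R A ∘ₗ f) * toConv h).ofConv =
      (toConv (Algebra.linearMap R B ∘ₗ f) * toConv (g ∘ₗ h)).ofConv := by
  ext c
  simp [(ℛ R c).convMul_apply, ← Algebra.smul_def]

lemma algHom_comp_convMul_eq_one (h : A →ₐ[R] B) {f g : C →ₗ[R] A}
    (hfg : toConv f * toConv g = 1) :
    toConv (h.toLinearMap ∘ₗ f) * toConv (h.toLinearMap ∘ₗ g) = 1 := by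
  have hcomp := LinearMap.algHom_comp_convMul_distrib h (toConv f) (toConv g)
  rw [hfg] at hcomp
  ext c
  exact congr($hcomp c).symm.trans (by simp)

end ConvolutionByScalars

section LeftWinding

variable {R A : Type*} [CommSemiring R] [Semiring A] [Bialgebra R A]

def leftWinding (χ : A →ₐ[R] R) : A →ₐ[R] A :=
  (Algebra.TensorProduct.lid R A).toAlgHom.comp
    ((Algebra.TensorProduct.map χ (AlgHom.id R A)).comp (Bialgebra.comulAlgHom R A))

lemma toLinearMap_leftWinding (χ : A →ₐ[R] R) :
    (leftWinding χ).toLinearMap =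
      (TensorProduct.lid R A).toLinearMap ∘ₗ rTensor A χ.toLinearMap ∘ₗ comul := rfl

lemma toConv_leftWinding (χ : A →ₐ[R] R) :
    toConv (leftWinding χ).toLinearMap =
      toConv (Algebra.linearMap R A ∘ₗ χ.toLinearMap) * toConv LinearMap.id := by
  rw [toLinearMap_leftWinding, ← LinearMap.comp_assoc, lid_comp_rTensor_eq_mul']
  rfl

lemma comul_comp_leftWinding (χ : A →ₐ[R] R) :
    comul ∘ₗ (leftWinding χ).toLinearMap = rTensor A (leftWinding χ).toLinearMap ∘ₗ comul := by
  have hlid : (TensorProduct.lid R (A ⊗[R] A)).toLinearMap ∘ₗ rTensor (A ⊗[R] A) χ.toLinearMap ∘ₗ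
      (TensorProduct.assoc R A A A).toLinearMap =
      rTensor A ((TensorProduct.lid R A).toLinearMap ∘ₗ rTensor A χ.toLinearMap) := by
    ext a b c
    simp [TensorProduct.smul_tmul']
  have hnat : comul ∘ₗ (TensorProduct.lid R A).toLinearMap ∘ₗ rTensor A χ.toLinearMap =
      (TensorProduct.lid R (A ⊗[R] A)).toLinearMap ∘ₗ rTensor (A ⊗[R] A) χ.toLinearMap ∘ₗ
        lTensor A comul := by
    ext a b
    simp
  calc comul ∘ₗ (leftWinding χ).toLinearMap
      = (comul ∘ₗ (TensorProduct.lid R A).toLinearMap ∘ₗ rTensor A χ.toLinearMap) ∘ₗ comul := rfl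
    _ = ((TensorProduct.lid R (A ⊗[R] A)).toLinearMap ∘ₗ rTensor (A ⊗[R] A) χ.toLinearMap ∘ₗ
          (TensorProduct.assoc R A A A).toLinearMap) ∘ₗ rTensor A comul ∘ₗ comul := by
        rw [hnat]
        simp only [LinearMap.comp_assoc, coassoc]
    _ = rTensor A (leftWinding χ).toLinearMap ∘ₗ comul := by
        rw [hlid, toLinearMap_leftWinding]
        simp only [rTensor_comp, LinearMap.comp_assoc]

end LeftWinding

section Characters

variable {R A : Type*} [CommSemiring R] [Semiring A] [HopfAlgebra R A]

def characterInv (σ : A →ₐ[R] R) : A →ₐ[R] R :=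
  .ofLinearMap (σ.toLinearMap ∘ₗ antipode R) (by simp) fun a b ↦ by
    simp [antipode_mul_antidistrib, mul_comm]

def characterUnit (σ : A →ₐ[R] R) : (WithConv (A →ₗ[R] A))ˣ where
  val := toConv (Algebra.linearMap R A ∘ₗ σ.toLinearMap)
  inv := toConv (Algebra.linearMap R A ∘ₗ (characterInv σ).toLinearMap)
  val_inv := (algHom_comp_convMul_eq_one ((Algebra.ofId R A).comp σ) LinearMap.id_mul_antipode :)
  inv_val := (algHom_comp_convMul_eq_one ((Algebra.ofId R A).comp σ) LinearMap.antipode_mul_id :)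

lemma val_characterUnit (σ : A →ₐ[R] R) :
    ↑(characterUnit σ) = toConv (Algebra.linearMap R A ∘ₗ σ.toLinearMap) := rfl

lemma toConv_leftWinding_characterInv (σ : A →ₐ[R] R) :
    toConv (leftWinding (characterInv σ)).toLinearMap =
      ↑(characterUnit σ)⁻¹ * toConv (LinearMap.id : A →ₗ[R] A) :=
  toConv_leftWinding _

lemma toConv_comp_leftWinding_characterInv (σ : A →ₐ[R] R) (g : A →ₗ[R] A) :
    toConv (g ∘ₗ (leftWinding (characterInv σ)).toLinearMap) = ↑(characterUnit σ)⁻¹ * toConv g := by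
  rw [← ofConv_toConv (leftWinding _).toLinearMap, toConv_leftWinding_characterInv]
  exact congrArg toConv (comp_algebraMap_convMul g _ LinearMap.id)

end Characters

section CoassocTwist

variable {R C : Type*} [CommSemiring R] [AddCommMonoid C] [Module R C] [Coalgebra R C]

lemma coassoc_lTensor_comp_comul (f : C →ₗ[R] C) (hf : comul ∘ₗ f = rTensor C f ∘ₗ comul) :
    (TensorProduct.assoc R C C C).toLinearMap ∘ₗ rTensor C (lTensor C f ∘ₗ comul) ∘ₗ
        lTensor C f ∘ₗ comul =
      lTensor C (lTensor C f ∘ₗ comul) ∘ₗ lTensor C f ∘ₗ comul := by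
  rw [rTensor_def] at hf
  simp only [coassoc_simps, hf]

end CoassocTwist

section Twisting

variable (σ : H →ₐ[k] k)

lemma twistedComul_eq :
    twistedComul σ = lTensor H (leftWinding (characterInv σ)).toLinearMap ∘ₗ comul := by
  rw [twistedComul, sigmaSmul, ← lid_comp_rTensor, LinearMap.comp_assoc, ← rTensor_comp,
    ← LinearMap.comp_assoc, ← lTensor_comp, toLinearMap_leftWinding]
  rfl

def twistedComulAlgHom : H →ₐ[k] H ⊗[k] H :=
  (Algebra.TensorProduct.map (AlgHom.id k H) (leftWinding (characterInv σ))).comp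
    (Bialgebra.comulAlgHom k H)

lemma toLinearMap_twistedComulAlgHom : (twistedComulAlgHom σ).toLinearMap = twistedComul σ := by
  rw [twistedComul_eq]
  rfl

lemma twistedComul_coassoc :
    (TensorProduct.assoc k H H H).toLinearMap ∘ₗ rTensor H (twistedComul σ) ∘ₗ twistedComul σ =
      lTensor H (twistedComul σ) ∘ₗ twistedComul σ := by
  rw [twistedComul_eq]
  exact coassoc_lTensor_comp_comul _ (comul_comp_leftWinding _)

lemma twistedComul_mul (a b : H) :
    twistedComul σ (a * b) = twistedComul σ a * twistedComul σ b := by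
  simp only [← toLinearMap_twistedComulAlgHom, AlgHom.toLinearMap_apply, map_mul]

lemma twistedComul_one : twistedComul σ 1 = 1 := by
  rw [← toLinearMap_twistedComulAlgHom, AlgHom.toLinearMap_apply, map_one]

lemma toConv_twistedAntipode :
    toConv (twistedAntipode σ) =
      ↑(characterUnit σ) * toConv (antipode k (A := H)) * ↑(characterUnit σ) := by
  have hsigmaSmul_comm :
      sigmaSmul σ ∘ₗ (TensorProduct.comm k H H).toLinearMap ∘ₗ rTensor H (antipode k) =
      mul' k H ∘ₗ map (antipode k) (Algebra.linearMap k H ∘ₗ σ.toLinearMap) := by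
    ext a b
    simp [sigmaSmul, Algebra.smul_def, Algebra.commutes]
  have hsigmaSmul :
      sigmaSmul σ = mul' k H ∘ₗ rTensor H (Algebra.linearMap k H ∘ₗ σ.toLinearMap) := by
    rw [sigmaSmul, ← lid_comp_rTensor, lid_comp_rTensor_eq_mul']
  rw [twistedAntipode, hsigmaSmul_comm, hsigmaSmul, mul_assoc, val_characterUnit]
  apply WithConv.ext
  simp only [LinearMap.convMul_def, ofConv_toConv, coassoc_simps]

lemma lid_comp_rTensor_comp_twistedComul :
    (TensorProduct.lid k H).toLinearMap ∘ₗ rTensor H σ.toLinearMap ∘ₗ twistedComul σ =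
      LinearMap.id := by
  apply toConv_injective
  calc toConv ((TensorProduct.lid k H).toLinearMap ∘ₗ rTensor H σ.toLinearMap ∘ₗ twistedComul σ)
      = ↑(characterUnit σ) * toConv (leftWinding (characterInv σ)).toLinearMap := by
        rw [twistedComul_eq, ← LinearMap.comp_assoc, lid_comp_rTensor_eq_mul']
        simp only [val_characterUnit, LinearMap.convMul_def, coassoc_simps]
    _ = toConv LinearMap.id := by
        rw [toConv_leftWinding_characterInv, Units.mul_inv_cancel_left]

lemma rid_comp_lTensor_comp_twistedComul :
    (TensorProduct.rid k H).toLinearMap ∘ₗ lTensor H σ.toLinearMap ∘ₗ twistedComul σ =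
      LinearMap.id := by
  apply toConv_injective
  calc toConv ((TensorProduct.rid k H).toLinearMap ∘ₗ lTensor H σ.toLinearMap ∘ₗ twistedComul σ)
      = toConv LinearMap.id * toConv (Algebra.linearMap k H ∘ₗ σ.toLinearMap ∘ₗ
          (leftWinding (characterInv σ)).toLinearMap) := by
        rw [twistedComul_eq, ← LinearMap.comp_assoc, rid_comp_lTensor_eq_mul']
        simp only [LinearMap.convMul_def, coassoc_simps]
    _ = toConv LinearMap.id := by
        rw [← LinearMap.comp_assoc, toConv_comp_leftWinding_characterInv, ← val_characterUnit,
          Units.inv_mul, mul_one]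

lemma mul'_comp_rTensor_twistedAntipode_comp_twistedComul :
    mul' k H ∘ₗ rTensor H (twistedAntipode σ) ∘ₗ twistedComul σ =
      Algebra.linearMap k H ∘ₗ σ.toLinearMap := by
  apply toConv_injective
  calc toConv (mul' k H ∘ₗ rTensor H (twistedAntipode σ) ∘ₗ twistedComul σ)
      = toConv (twistedAntipode σ) * toConv (leftWinding (characterInv σ)).toLinearMap := by
        rw [twistedComul_eq]
        simp only [LinearMap.convMul_def, coassoc_simps]
    _ = ↑(characterUnit σ) := by
        rw [toConv_twistedAntipode, toConv_leftWinding_characterInv]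
        simp [mul_assoc]

lemma mul'_comp_lTensor_twistedAntipode_comp_twistedComul :
    mul' k H ∘ₗ lTensor H (twistedAntipode σ) ∘ₗ twistedComul σ =
      Algebra.linearMap k H ∘ₗ σ.toLinearMap := by
  apply toConv_injective
  calc toConv (mul' k H ∘ₗ lTensor H (twistedAntipode σ) ∘ₗ twistedComul σ)
      = toConv LinearMap.id *
          toConv (twistedAntipode σ ∘ₗ (leftWinding (characterInv σ)).toLinearMap) := by
        rw [twistedComul_eq]
        simp only [LinearMap.convMul_def, coassoc_simps]
    _ = ↑(characterUnit σ) := by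
        rw [toConv_comp_leftWinding_characterInv, toConv_twistedAntipode]
        simp [← mul_assoc]

end Twisting

theorem stmt3 (σ : H →ₐ[k] k) :
    -- Δ₂ is coassociative
    ((TensorProduct.assoc k H H H).toLinearMap ∘ₗ
        LinearMap.rTensor H (twistedComul σ) ∘ₗ twistedComul σ =
      LinearMap.lTensor H (twistedComul σ) ∘ₗ twistedComul σ) ∧
    -- ε₂ = σ is a counit for Δ₂
    ((TensorProduct.lid k H).toLinearMap ∘ₗ
        LinearMap.rTensor H σ.toLinearMap ∘ₗ twistedComul σ = LinearMap.id) ∧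
    ((TensorProduct.rid k H).toLinearMap ∘ₗ
        LinearMap.lTensor H σ.toLinearMap ∘ₗ twistedComul σ = LinearMap.id) ∧
    -- Δ₂ is an algebra map
    (∀ a b : H, twistedComul σ (a * b) = twistedComul σ a * twistedComul σ b) ∧
    (twistedComul σ (1 : H) = 1) ∧
    -- S₂ satisfies the antipode axioms for (Δ₂, ε₂)
    (LinearMap.mul' k H ∘ₗ LinearMap.rTensor H (twistedAntipode σ) ∘ₗ twistedComul σ =
      (Algebra.linearMap k H) ∘ₗ σ.toLinearMap) ∧
    (LinearMap.mul' k H ∘ₗ LinearMap.lTensor H (twistedAntipode σ) ∘ₗ twistedComul σ =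
      (Algebra.linearMap k H) ∘ₗ σ.toLinearMap) :=
  ⟨twistedComul_coassoc σ, lid_comp_rTensor_comp_twistedComul σ,
    rid_comp_lTensor_comp_twistedComul σ, twistedComul_mul σ, twistedComul_one σ,
    mul'_comp_rTensor_twistedAntipode_comp_twistedComul σ,
    mul'_comp_lTensor_twistedAntipode_comp_twistedComul σ⟩

end
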